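/- arXiv:2302.07110 — 2 statements merged into one kernel-verified Lean document; each statement's English description precedes it below -/
import Mathlib

section
/- Let P be a path in a graph G with endpoints x and y, let H be a complete component of G - V(P) with attachment points s_1, ..., s_k listed in order of traversal of P from x to y, with S = {s_1, ..., s_k}, and suppose that for every S_0 ⊆ S with |S_0| ≤ |V(H)|, the bipartite graph induced between S_0 and V(H) has a matching saturating S_0. Then: (1) if s_1 = x, then G has a path with endpoint y longer than P; if s_k = y, then G has a path with endpoint x longer than P; and if some s_i and s_{i+1} are consecutive on P, then G has a path with endpoints x and y longer than P; (2) if some component of P - S has fewer than |V(H)| vertices, then G has a path longer than P. -/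
/-!
Every longer path is obtained by rerouting `P` through `H`. Since `H` is a clique, any two of its
vertices are joined by a path through all of `H`, with `|V(H)| - 1` edges. An attachment point at
an end of `P` extends `P` by one edge, and two consecutive attachment points `s, s'` allow replacing
the edge `ss'` by a detour into `H`. A component `C` of `P - S` is bounded by at most two attachment
points; replacing `C` by a spanning path of `H` entered and left through them gains
`|V(H)| - |C|` edges. When there are two of them, the matching condition for that pair of
attachment points supplies distinct neighbours in `H`, which the spanning path of `H` joins.
-/

open SimpleGraph

namespace GallaiFormal

variable {V : Type}

/-- A vertex `v` is a *Gallai vertex* of `G` if every longest path of `G` contains `v`. -/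
def IsGallaiVertex (G : SimpleGraph V) (v : V) : Prop :=
  ∀ ⦃a b : V⦄ (p : G.Walk a b), p.IsPath →
    (∀ ⦃c d : V⦄ (q : G.Walk c d), q.IsPath → q.length ≤ p.length) → v ∈ p.support

/-- `G` has no induced subgraph isomorphic to `H` (`G` is `H`-free). -/
def IsFree {W : Type} (G : SimpleGraph V) (H : SimpleGraph W) : Prop :=
  ¬ ∃ s : Set V, Nonempty (H ≃g (G.induce s))

/-- `A` is an independent set of `G`. -/
def IsIndepSet (G : SimpleGraph V) (A : Set V) : Prop :=
  A.Pairwise fun a b => ¬ G.Adj a b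

/-- `H` is (the vertex set of) a connected component of `G - s`. -/
def IsCompOutside (G : SimpleGraph V) (s : Set V) (H : Set V) : Prop :=
  H.Nonempty ∧ Disjoint H s ∧ (G.induce H).Connected ∧
    ∀ u ∈ H, ∀ v : V, G.Adj u v → v ∉ s → v ∈ H

/-- The set of attachment points of `H` on the path `p`. -/
def attachSet (G : SimpleGraph V) {x y : V} (p : G.Walk x y) (H : Set V) : Set V :=
  {w | w ∈ p.support ∧ ∃ u ∈ H, G.Adj u w}

/-- `p` is an `x`-fiber: a longest path among paths having its first endpoint as an endpoint. -/
def IsEndFiber (G : SimpleGraph V) {x y : V} (p : G.Walk x y) : Prop :=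
  p.IsPath ∧ ∀ (z : V) (q : G.Walk x z), q.IsPath → q.length ≤ p.length

/-- `p` is an `xy`-fiber: a longest path among paths with the same two endpoints. -/
def IsFiberBetween (G : SimpleGraph V) {x y : V} (p : G.Walk x y) : Prop :=
  p.IsPath ∧ ∀ q : G.Walk x y, q.IsPath → q.length ≤ p.length

/-- `p` is a longest path of `G`. -/
def IsLongestPath (G : SimpleGraph V) {x y : V} (p : G.Walk x y) : Prop :=
  p.IsPath ∧ ∀ ⦃a b : V⦄ (q : G.Walk a b), q.IsPath → q.length ≤ p.length

/-- The (index) interval `[a, b]` of positions on `p` is a maximal interval avoiding `S`;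
these intervals correspond to the components of `P - S`. -/
def IsGapInterval (G : SimpleGraph V) {x y : V} (p : G.Walk x y) (S : Set V) (a b : ℕ) : Prop :=
  a ≤ b ∧ b ≤ p.length ∧ (∀ i, a ≤ i → i ≤ b → p.getVert i ∉ S) ∧
    (a = 0 ∨ p.getVert (a - 1) ∈ S) ∧ (b = p.length ∨ p.getVert (b + 1) ∈ S)

/-- The rank of the vertex at position `j` on `p` (w.r.t. the attachment set `S`): the maximum
length of a subpath of `p` ending at position `j` and avoiding `S`. -/
noncomputable def rankAt (G : SimpleGraph V) {x y : V} (p : G.Walk x y) (S : Set V) (j : ℕ) : ℕ :=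
  sSup {r : ℕ | ∃ a : ℕ, a + r = j ∧ ∀ i, a ≤ i → i ≤ j → p.getVert i ∉ S}

/-- `G` is `k`-connected. -/
def IsKConnected [Fintype V] (k : ℕ) (G : SimpleGraph V) : Prop :=
  k < Fintype.card V ∧ ∀ s : Set V, s.ncard < k → (G.induce sᶜ).Connected

/-- `B` is (the vertex set of) a block of `G`: a maximal connected subgraph without cut-vertices. -/
def IsBlock (G : SimpleGraph V) (B : Set V) : Prop :=
  (G.induce B).Connected ∧ (∀ v ∈ B, (G.induce (B \ {v})).Preconnected) ∧
    ∀ B' : Set V, B ⊆ B' → (G.induce B').Connected →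
      (∀ v ∈ B', (G.induce (B' \ {v})).Preconnected) → B' = B

/-- `B` is a special block of `G`: a block such that every longest path contains an edge of `B`. -/
def IsSpecialBlock (G : SimpleGraph V) (B : Set V) : Prop :=
  IsBlock G B ∧ ∀ ⦃a b : V⦄ (p : G.Walk a b), IsLongestPath G p →
    ∃ i < p.length, p.getVert i ∈ B ∧ p.getVert (i + 1) ∈ B

end GallaiFormal

namespace SimpleGraph

variable {V : Type*} {G : SimpleGraph V}

theorem IsClique.exists_isPath {s : Set V} (hs : G.IsClique s) {u v : V} (hu : u ∈ s)
    (hv : v ∈ s) : ∃ q : G.Walk u v, q.IsPath ∧ ∀ w ∈ q.support, w ∈ s := by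
  by_cases huv : u = v
  · subst huv
    exact ⟨.nil, .nil, by simpa using hu⟩
  · exact ⟨.cons (hs hu hv huv) .nil, by simp [huv], by simp [hu, hv]⟩

theorem IsClique.exists_isPath_length_add_one_eq_card {s : Finset V} (hs : G.IsClique (s : Set V))
    {u v : V} (hu : u ∈ s) (hv : v ∈ s) (huv : u ≠ v) :
    ∃ q : G.Walk u v, q.IsPath ∧ q.length + 1 = s.card ∧ ∀ w ∈ q.support, w ∈ s := by
  classical
  induction s using Finset.strongInduction generalizing u with
  | H s ih =>
  by_cases hw : ∃ w ∈ s, w ≠ u ∧ w ≠ v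
  · obtain ⟨w, hws, hwu, hwv⟩ := hw
    obtain ⟨q, hq, hlen, hqs⟩ := ih (s.erase u) (Finset.erase_ssubset hu) (hs.subset (by simp))
      (Finset.mem_erase.2 ⟨hwu, hws⟩) (Finset.mem_erase.2 ⟨huv.symm, hv⟩) hwv
    refine ⟨.cons (hs hu hws hwu.symm) q, hq.cons fun h => (Finset.mem_erase.1 (hqs u h)).1 rfl,
      by rw [Walk.length_cons, hlen, Finset.card_erase_add_one hu], ?_⟩
    simp only [Walk.support_cons, List.mem_cons, forall_eq_or_imp]
    exact ⟨hu, fun w hw => Finset.mem_of_mem_erase (hqs w hw)⟩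
  · push Not at hw
    have hs2 : s = {u, v} := by grind
    exact ⟨.cons (hs hu hv huv) .nil, by simp [huv], by simp [hs2, Finset.card_pair huv],
      by simp [hu, hv]⟩

theorem IsClique.exists_isPath_length_add_one_eq_ncard {s : Set V} (hs : G.IsClique s)
    (hfin : s.Finite) {u v : V} (hu : u ∈ s) (hv : v ∈ s) (huv : u ≠ v) :
    ∃ q : G.Walk u v, q.IsPath ∧ q.length + 1 = s.ncard ∧ ∀ w ∈ q.support, w ∈ s := by
  obtain ⟨F, rfl⟩ := hfin.exists_finset_coe
  simpa [Set.ncard_coe_finset] using hs.exists_isPath_length_add_one_eq_card hu hv huv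

namespace Walk

variable {u v a b : V}

theorem IsPath.append_cons {P : G.Walk u a} {R : G.Walk b v} (hP : P.IsPath) (hR : R.IsPath)
    (h : G.Adj a b) (hPR : P.support.Disjoint R.support) : (P.append (cons h R)).IsPath := by
  rw [isPath_def, support_append, support_cons, List.tail_cons]
  exact hP.support_nodup.append hR.support_nodup hPR

theorem IsPath.disjoint_support_take_drop {p : G.Walk u v} (hp : p.IsPath) {i j : ℕ} (hij : i < j)
    (hj : j ≤ p.length) : (p.take i).support.Disjoint (p.drop j).support := by
  rw [support_take, drop_support_eq_support_drop_min, min_eq_left hj]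
  exact List.disjoint_take_drop hp.support_nodup hij

theorem support_take_subset (p : G.Walk u v) (i : ℕ) : (p.take i).support ⊆ p.support :=
  (p.isSubwalk_take i).support_subset

theorem support_drop_subset (p : G.Walk u v) (j : ℕ) : (p.drop j).support ⊆ p.support :=
  (p.isSubwalk_drop j).support_subset

theorem IsPath.exists_isPath_append_drop {p : G.Walk u v} (hp : p.IsPath) (j : ℕ)
    {N : G.Walk a b} (hN : N.IsPath) (hNp : ∀ w ∈ N.support, w ∉ p.support)
    (hb : G.Adj b (p.getVert j)) :
    ∃ q : G.Walk a v, q.IsPath ∧ q.length = N.length + 1 + (p.length - j) :=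
  ⟨N.append (cons hb (p.drop j)),
    hN.append_cons (hp.drop j) hb fun w hwN hwd => hNp w hwN (p.support_drop_subset j hwd),
    by simp only [length_append, length_cons, drop_length]; omega⟩

theorem IsPath.exists_isPath_take_append {p : G.Walk u v} (hp : p.IsPath) {i : ℕ}
    (hi : i ≤ p.length) {N : G.Walk a b} (hN : N.IsPath)
    (hNp : ∀ w ∈ N.support, w ∉ p.support) (ha : G.Adj (p.getVert i) a) :
    ∃ q : G.Walk u b, q.IsPath ∧ q.length = i + 1 + N.length :=
  ⟨(p.take i).append (cons ha N),
    (hp.take i).append_cons hN ha fun w hwt hwN => hNp w hwN (p.support_take_subset i hwt),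
    by simp only [length_append, length_cons, take_length, min_eq_left hi]; omega⟩

theorem IsPath.exists_isPath_take_append_drop {p : G.Walk u v} (hp : p.IsPath) {i j : ℕ}
    (hij : i < j) (hj : j ≤ p.length) {N : G.Walk a b} (hN : N.IsPath)
    (hNp : ∀ w ∈ N.support, w ∉ p.support) (ha : G.Adj (p.getVert i) a)
    (hb : G.Adj b (p.getVert j)) :
    ∃ q : G.Walk u v, q.IsPath ∧ q.length = i + N.length + 2 + (p.length - j) := by
  refine ⟨(p.take i).append (cons ha (N.append (cons hb (p.drop j)))),
    (hp.take i).append_cons (hN.append_cons (hp.drop j) hb ?_) ha ?_, ?_⟩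
  · exact fun w hwN hwd => hNp w hwN (p.support_drop_subset j hwd)
  · rw [support_append, support_cons, List.tail_cons, List.disjoint_append_right]
    exact ⟨fun w hwt hwN => hNp w hwN (p.support_take_subset i hwt),
      hp.disjoint_support_take_drop hij hj⟩
  · simp only [length_append, length_cons, take_length, drop_length,
      min_eq_left (hij.trans_le hj).le]
    omega

end Walk
end SimpleGraph

namespace GallaiFormal

variable {V : Type}

theorem exists_longer_of_short_gap {G : SimpleGraph V} {x y : V} {p : G.Walk x y} {H : Set V}
    (hp : p.IsPath) (hHp : ∀ w ∈ H, w ∉ p.support) (hH : G.IsClique H)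
    (hmatch : ∀ S0 ⊆ attachSet G p H, S0.ncard ≤ H.ncard →
      ∃ f : V → V, Set.InjOn f S0 ∧ ∀ s ∈ S0, f s ∈ H ∧ G.Adj s (f s))
    {a b : ℕ} (hgap : IsGapInterval G p (attachSet G p H) a b) (hcard : b - a + 1 < H.ncard) :
    ∃ (u w : V) (q : G.Walk u w), q.IsPath ∧ p.length < q.length := by
  obtain ⟨hab, hb, -, hleft, hright⟩ := hgap
  have hfin : H.Finite := Set.finite_of_ncard_pos (by omega)
  have ham : ∀ u ∈ H, ∀ v ∈ H, u ≠ v → ∃ N : G.Walk u v,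
      N.IsPath ∧ N.length + 1 = H.ncard ∧ ∀ w ∈ N.support, w ∉ p.support := by
    intro u hu v hv huv
    obtain ⟨N, hN, hlen, hNH⟩ := hH.exists_isPath_length_add_one_eq_ncard hfin hu hv huv
    exact ⟨N, hN, hlen, fun w hw => hHp w (hNH w hw)⟩
  obtain ⟨u₀, hu₀⟩ : H.Nonempty := Set.nonempty_of_ncard_ne_zero (by omega)
  rcases Nat.eq_zero_or_pos a with rfl | ha <;> rcases hb.eq_or_lt with rfl | hb'
  · obtain ⟨v₀, hv₀, hvu₀⟩ := Set.exists_ne_of_one_lt_ncard (by omega : 1 < H.ncard) u₀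
    obtain ⟨N, hN, hlen, -⟩ := ham u₀ hu₀ v₀ hv₀ hvu₀.symm
    exact ⟨_, _, N, hN, by omega⟩
  · obtain ⟨-, u, hu, hub⟩ := hright.resolve_left hb'.ne
    obtain ⟨z, hz, hzu⟩ := Set.exists_ne_of_one_lt_ncard (by omega : 1 < H.ncard) u
    obtain ⟨N, hN, hlen, hNp⟩ := ham z hz u hu hzu
    obtain ⟨q, hq, hqlen⟩ := hp.exists_isPath_append_drop (b + 1) hN hNp hub
    exact ⟨_, _, q, hq, by omega⟩
  · obtain ⟨-, u, hu, hua⟩ := hleft.resolve_left ha.ne'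
    obtain ⟨z, hz, hzu⟩ := Set.exists_ne_of_one_lt_ncard (by omega : 1 < H.ncard) u
    obtain ⟨N, hN, hlen, hNp⟩ := ham u hu z hz hzu.symm
    obtain ⟨q, hq, hqlen⟩ := hp.exists_isPath_take_append (by omega : a - 1 ≤ p.length) hN hNp
      hua.symm
    exact ⟨_, _, q, hq, by omega⟩
  · have hne : p.getVert (a - 1) ≠ p.getVert (b + 1) := fun h => by
      have := hp.getVert_injOn (show a - 1 ≤ p.length by omega)
        (show b + 1 ≤ p.length by omega) h
      omega
    obtain ⟨f, hfinj, hf⟩ := hmatch {p.getVert (a - 1), p.getVert (b + 1)}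
      (Set.insert_subset (hleft.resolve_left ha.ne') (Set.singleton_subset_iff.2
        (hright.resolve_left hb'.ne)))
      (by rw [Set.ncard_pair hne]; omega)
    obtain ⟨hfa, hadja⟩ := hf _ (Set.mem_insert _ _)
    obtain ⟨hfb, hadjb⟩ := hf _ (Set.mem_insert_of_mem _ rfl)
    obtain ⟨N, hN, hlen, hNp⟩ := ham _ hfa _ hfb fun h =>
      hne (hfinj (Set.mem_insert _ _) (Set.mem_insert_of_mem _ rfl) h)
    obtain ⟨q, hq, hqlen⟩ := hp.exists_isPath_take_append_drop (by omega : a - 1 < b + 1)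
      (by omega) hN hNp hadja hadjb.symm
    exact ⟨_, _, q, hq, by omega⟩

/-- Lemma, parts 1 and 2: `H` is a complete component of `G - V(p)` whose
attachment set satisfies the matching (saturation) condition.  (1) If `x` (resp. `y`) is an
attachment point there is a longer path with endpoint `y` (resp. `x`), and if two attachment
points are consecutive on `p` there is a longer `xy`-path; (2) if some component of `P - S`
has fewer than `|V(H)|` vertices, there is a longer path. -/
theorem stmt8 (G : SimpleGraph V) {x y : V} (p : G.Walk x y) (hp : p.IsPath)
    (H : Set V) (hH : IsCompOutside G {v | v ∈ p.support} H) (hcomplete : G.IsClique H)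
    (hmatch : ∀ S0 ⊆ attachSet G p H, S0.ncard ≤ H.ncard →
      ∃ f : V → V, Set.InjOn f S0 ∧ ∀ s ∈ S0, f s ∈ H ∧ G.Adj s (f s)) :
    ((x ∈ attachSet G p H →
        ∃ (z : V) (q : G.Walk z y), q.IsPath ∧ p.length < q.length) ∧
      (y ∈ attachSet G p H →
        ∃ (z : V) (q : G.Walk x z), q.IsPath ∧ p.length < q.length) ∧
      (∀ i, i < p.length → p.getVert i ∈ attachSet G p H →
        p.getVert (i + 1) ∈ attachSet G p H →
        ∃ q : G.Walk x y, q.IsPath ∧ p.length < q.length)) ∧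
    (∀ a b : ℕ, IsGapInterval G p (attachSet G p H) a b → b - a + 1 < H.ncard →
      ∃ (u w : V) (q : G.Walk u w), q.IsPath ∧ p.length < q.length) := by
  have hHp : ∀ w ∈ H, w ∉ p.support := fun w hw => Set.disjoint_left.1 hH.2.1 hw
  refine ⟨⟨?_, ?_, ?_⟩, fun a b hgap hcard =>
    exists_longer_of_short_gap hp hHp hcomplete hmatch hgap hcard⟩
  · rintro ⟨-, u, hu, hux⟩
    exact ⟨u, .cons hux p, hp.cons (hHp u hu), by simp⟩
  · rintro ⟨-, u, hu, huy⟩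
    exact ⟨u, p.concat huy.symm, hp.concat (hHp u hu) huy.symm, by simp⟩
  · rintro i hi ⟨-, u, hu, hui⟩ ⟨-, u', hu', hu'i⟩
    obtain ⟨N, hN, hNH⟩ := hcomplete.exists_isPath hu hu'
    obtain ⟨q, hq, hlen⟩ := hp.exists_isPath_take_append_drop (Nat.lt_succ_self i) hi hN
      (fun w hw => hHp w (hNH w hw)) hui.symm hu'i
    exact ⟨q, hq, by omega⟩

end GallaiFormal
end

section
/- Every connected graph with independence number at most 3 has a Gallai vertex; equivalently, the graph 4P_1 (four isolated vertices) is a fixer. -/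
/-
Let `p` be a longest path from `x` to `y`. If `p` is Hamiltonian, every vertex is a Gallai
vertex. Otherwise the endpoints of `p` have all their neighbours on `p` and are non-adjacent, so
independence number at most 3 forces the vertices off `p` to form a clique, and every other
vertex to be adjacent to `x`, to `y`, or to any given vertex `u` off `p`. Rotation arguments
(re-routing `p` through a vertex off `p`) then show that all edges leaving `p` end at one vertex
`w` of `p`. A longest path `q` avoiding `w` cannot cross between `p` and the outside (such a
crossing edge ends at `w`), cannot stay on `p` (it has as many vertices as `p`, so it would use
all of them), and cannot stay off `p` (then `x` and `y` are off `q`, hence adjacent by the clique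
property for `q`).
-/

open SimpleGraph

namespace GallaiFormal

variable {V : Type}

theorem exists_le_lt_and_not_succ {P : ℕ → Prop} {a b : ℕ} (hab : a ≤ b) (ha : P a)
    (hb : ¬ P b) : ∃ s, a ≤ s ∧ s < b ∧ P s ∧ ¬ P (s + 1) := by
  induction b, hab using Nat.le_induction with
  | base => exact absurd ha hb
  | succ b hab ih =>
    by_cases h : P b
    · exact ⟨b, hab, b.lt_succ_self, h, hb⟩
    · obtain ⟨s, has, hsb, hs, hs'⟩ := ih h
      exact ⟨s, has, hsb.trans b.lt_succ_self, hs, hs'⟩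

theorem exists_isLongestPath [Fintype V] [Nonempty V] (G : SimpleGraph V) :
    ∃ (a b : V) (p : G.Walk a b), IsLongestPath G p := by
  set S : Set ℕ := {n | ∃ (a b : V) (p : G.Walk a b), p.IsPath ∧ p.length = n}
  have hSne : S.Nonempty := ⟨0, Classical.arbitrary V, _, .nil, Walk.IsPath.nil, rfl⟩
  have hbdd : BddAbove S :=
    ⟨Fintype.card V, by rintro n ⟨a, b, p, hp, rfl⟩; exact hp.length_lt.le⟩
  obtain ⟨a, b, p, hp, hl⟩ := Nat.sSup_mem hSne hbdd
  exact ⟨a, b, p, hp, fun c d q hq => hl ▸ le_csSup hbdd ⟨c, d, q, hq, rfl⟩⟩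

section

variable {G : SimpleGraph V}

theorem isChain_reverse_of_adj {l : List V} (h : l.IsChain G.Adj) : l.reverse.IsChain G.Adj :=
  List.isChain_reverse.2 (h.imp fun _ _ hab => hab.symm)

theorem exists_boundary_adj_mem_support {a b c e : V} (q : G.Walk a b) {S : Set V}
    (hc : c ∈ q.support) (hcS : c ∈ S) (he : e ∈ q.support) (heS : e ∉ S) :
    ∃ z ∈ S, ∃ z' ∉ S, G.Adj z z' ∧ z' ∈ q.support := by
  classical
  by_cases ha : a ∈ S
  · obtain ⟨d, hd, hd₁, hd₂⟩ := (q.takeUntil e he).exists_boundary_dart S ha heS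
    exact ⟨d.fst, hd₁, d.snd, hd₂, d.adj,
      q.dart_snd_mem_support_of_mem_darts (q.darts_takeUntil_subset_darts he hd)⟩
  · obtain ⟨d, hd, hd₁, hd₂⟩ := (q.takeUntil c hc).exists_boundary_dart Sᶜ ha (by simpa)
    exact ⟨d.snd, not_not.1 hd₂, d.fst, hd₁, d.adj.symm,
      q.dart_fst_mem_support_of_mem_darts (q.darts_takeUntil_subset_darts hc hd)⟩

theorem length_le_of_pairwise_not_adj {k : ℕ}
    (halpha : ∀ A : Set V, IsIndepSet G A → A.ncard ≤ k) {l : List V} (hn : l.Nodup)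
    (hl : l.Pairwise fun a b => ¬ G.Adj a b) : l.length ≤ k := by
  classical
  have : Std.Symm fun a b => ¬ G.Adj a b := ⟨fun _ _ h h' => h h'.symm⟩
  have hind : IsIndepSet G {v | v ∈ l} := fun a ha b hb hab => hl.forall ha hb hab
  have := halpha _ hind
  rwa [show {v | v ∈ l} = (l.toFinset : Set V) by ext; simp, Set.ncard_coe_finset,
    List.toFinset_card_of_nodup hn] at this

variable {x y : V} {p : G.Walk x y}

theorem head?_take_support (t : ℕ) : (p.support.take (t + 1)).head? = some x := by
  rw [List.head?_take, if_neg (Nat.succ_ne_zero t), ← p.cons_tail_support, List.head?_cons]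

theorem getLast?_take_support {t : ℕ} (ht : t ≤ p.length) :
    (p.support.take (t + 1)).getLast? = some (p.getVert t) := by
  simp [List.getLast?_take, ← p.getVert_eq_support_getElem? ht]

theorem head?_drop_support {t : ℕ} (ht : t ≤ p.length) :
    (p.support.drop t).head? = some (p.getVert t) := by
  rw [List.head?_drop, p.getVert_eq_support_getElem? ht]

theorem eq_end_of_mem_getLast?_drop_support {t : ℕ} {b : V}
    (hb : b ∈ (p.support.drop t).getLast?) : b = y := by
  rw [List.getLast?_drop] at hb
  split_ifs at hb
  · cases hb
  · rw [List.getLast?_eq_some_getLast (by simp), p.getLast_support] at hb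
    exact (Option.mem_some_iff.1 hb).symm

theorem IsLongestPath.reverse (hp : IsLongestPath G p) : IsLongestPath G p.reverse :=
  ⟨hp.1.reverse, fun _ _ q hq => (p.length_reverse).symm ▸ hp.2 q hq⟩

theorem IsLongestPath.mem_support_of_adj_start (hp : IsLongestPath G p) {u : V}
    (hu : G.Adj u x) : u ∈ p.support := by
  by_contra hu'
  have := hp.2 (Walk.cons hu p) (hp.1.cons hu')
  simp at this

theorem IsLongestPath.mem_support_of_adj_end (hp : IsLongestPath G p) {u : V}
    (hu : G.Adj u y) : u ∈ p.support := by
  simpa using hp.reverse.mem_support_of_adj_start hu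

theorem IsLongestPath.length_le_of_isChain (hp : IsLongestPath G p) {l : List V}
    (hc : l.IsChain G.Adj) (hn : l.Nodup) : l.length ≤ p.length + 1 := by
  rcases eq_or_ne l [] with rfl | hne
  · simp
  have hq := hp.2 (Walk.ofSupport l hne hc) (by rwa [Walk.isPath_def, Walk.support_ofSupport])
  rw [Walk.length_ofSupport] at hq
  omega

/- Each rotation argument below exhibits the vertex list of a path longer than `p`, as a
rearrangement of `p.support` with the vertices of `M` (off `p`) inserted. -/
theorem IsLongestPath.not_isChain_of_perm (hp : IsLongestPath G p) {M l : List V}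
    (hM : M ≠ []) (hMp : (M ++ p.support).Nodup) (hl : l.Perm (M ++ p.support)) :
    ¬ l.IsChain G.Adj := by
  intro hc
  have := hp.length_le_of_isChain hc (hl.nodup_iff.2 hMp)
  rw [hl.length_eq, List.length_append, p.length_support] at this
  have := List.length_pos_of_ne_nil hM
  omega

-- With `pᵢ = p.getVert i` and `L = p.length`, the path `u, pₜ, …, p₀, p_L, …, pₜ₊₁` would be
-- longer than `p`.
theorem IsLongestPath.not_adj_start_end_of_adj_getVert (hp : IsLongestPath G p) {u : V}
    (hu : u ∉ p.support) {t : ℕ} (ht : t ≤ p.length) (hut : G.Adj u (p.getVert t)) :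
    ¬ G.Adj x y := by
  intro hxy
  have hA := isChain_reverse_of_adj (p.isChain_adj_support.take (t + 1))
  have hB := isChain_reverse_of_adj (p.isChain_adj_support.drop (t + 1))
  refine hp.not_isChain_of_perm (M := [u]) (List.cons_ne_nil _ _)
    (by simpa [hu] using hp.1.support_nodup)
    ((((List.reverse_perm _).append (List.reverse_perm _)).trans (by simp)).cons u)
    (List.isChain_cons.2 ⟨?_, hA.append hB ?_⟩)
  · simp [List.head?_append, List.head?_reverse, getLast?_take_support ht, hut]
  · intro a ha b hb
    rw [List.getLast?_reverse, head?_take_support, Option.mem_some_iff] at ha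
    rw [List.head?_reverse] at hb
    rw [← ha, eq_end_of_mem_getLast?_drop_support hb]
    exact hxy

-- The longer path: `u, pₜ, …, p₀, pₜ₊₁, …, p_L`.
theorem IsLongestPath.not_adj_start_getVert_succ (hp : IsLongestPath G p) {u : V}
    (hu : u ∉ p.support) {t : ℕ} (ht : t < p.length) (hut : G.Adj u (p.getVert t)) :
    ¬ G.Adj x (p.getVert (t + 1)) := by
  intro hx
  have hA := isChain_reverse_of_adj (p.isChain_adj_support.take (t + 1))
  have hB := p.isChain_adj_support.drop (t + 1)
  refine hp.not_isChain_of_perm (M := [u]) (List.cons_ne_nil _ _)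
    (by simpa [hu] using hp.1.support_nodup)
    ((((List.reverse_perm _).append_right _).trans (by simp)).cons u)
    (List.isChain_cons.2 ⟨?_, hA.append hB ?_⟩)
  · simp [List.head?_append, List.head?_reverse, getLast?_take_support ht.le, hut]
  · intro a ha b hb
    rw [List.getLast?_reverse, head?_take_support, Option.mem_some_iff] at ha
    rw [head?_drop_support ht, Option.mem_some_iff] at hb
    rw [← ha, ← hb]
    exact hx

theorem IsLongestPath.not_adj_end_getVert (hp : IsLongestPath G p) {u : V}
    (hu : u ∉ p.support) {t : ℕ} (ht : t < p.length) (hut : G.Adj u (p.getVert (t + 1))) :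
    ¬ G.Adj y (p.getVert t) := by
  have key := hp.reverse.not_adj_start_getVert_succ (by simpa using hu)
    (t := p.length - (t + 1)) (by simp; omega)
  simp only [Walk.getVert_reverse] at key
  rw [show p.length - (p.length - (t + 1)) = t + 1 by omega,
    show p.length - (p.length - (t + 1) + 1) = t by omega] at key
  exact key hut

-- The longer path: `p₀, …, pₜ, u, (u',) pₜ₊₁, …, p_L`.
theorem IsLongestPath.not_adj_getVert_succ (hp : IsLongestPath G p) {u u' : V}
    (hu : u ∉ p.support) (hu' : u' ∉ p.support) (huu' : u = u' ∨ G.Adj u u') {t : ℕ}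
    (ht : t < p.length) (hut : G.Adj (p.getVert t) u) : ¬ G.Adj u' (p.getVert (t + 1)) := by
  intro hu't
  obtain ⟨M, hM, hMnd, hMc, hMhead, hMlast⟩ : ∃ M : List V, M ≠ [] ∧ (M ++ p.support).Nodup ∧
      M.IsChain G.Adj ∧ M.head? = some u ∧ M.getLast? = some u' := by
    rcases huu' with rfl | h
    · exact ⟨[u], by simp, by simpa [hu] using hp.1.support_nodup, by simp, rfl, rfl⟩
    · exact ⟨[u, u'], by simp, by simpa [hu, hu', h.ne] using hp.1.support_nodup, by simpa,
        rfl, rfl⟩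
  refine hp.not_isChain_of_perm hM hMnd ((List.perm_append_comm_assoc _ _ _).trans (by simp))
    ((p.isChain_adj_support.take (t + 1)).append
      (hMc.append (p.isChain_adj_support.drop (t + 1)) ?_) ?_)
  · intro a ha b hb
    rw [hMlast, Option.mem_some_iff] at ha
    rw [head?_drop_support ht, Option.mem_some_iff] at hb
    rw [← ha, ← hb]
    exact hu't
  · intro a ha b hb
    rw [getLast?_take_support ht.le, Option.mem_some_iff] at ha
    rw [List.head?_append, hMhead, Option.some_or, Option.mem_some_iff] at hb
    rw [← ha, ← hb]
    exact hut

-- The longer path: `u, pₜ, …, p₀, pₛ₊₁, …, p_L, pₛ, …, pₜ₊₁`.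
theorem IsLongestPath.not_adj_start_getVert_succ_of_adj_end (hp : IsLongestPath G p) {u : V}
    (hu : u ∉ p.support) {t s : ℕ} (hts : t < s) (hs : s < p.length)
    (hut : G.Adj u (p.getVert t)) (hys : G.Adj y (p.getVert s)) :
    ¬ G.Adj x (p.getVert (s + 1)) := by
  intro hx
  set A := p.support.take (t + 1)
  set C := (p.support.take (s + 1)).drop (t + 1)
  set D := p.support.drop (s + 1)
  have hsplit : p.support = A ++ (C ++ D) := by
    have hAC : A ++ C = p.support.take (s + 1) := by
      rw [← List.take_append_drop (t + 1) (p.support.take (s + 1)), List.take_take,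
        min_eq_left (by omega)]
    rw [← List.append_assoc, hAC, List.take_append_drop]
  have hA := isChain_reverse_of_adj (p.isChain_adj_support.take (t + 1))
  have hC := isChain_reverse_of_adj ((p.isChain_adj_support.take (s + 1)).drop (t + 1))
  have hD := p.isChain_adj_support.drop (s + 1)
  refine hp.not_isChain_of_perm (M := [u]) (List.cons_ne_nil _ _)
    (by simpa [hu] using hp.1.support_nodup) (l := u :: (A.reverse ++ (D ++ C.reverse)))
    ((((List.reverse_perm _).append
      (List.perm_append_comm.trans ((List.reverse_perm _).append_right _))).trans
        (by rw [hsplit]; simp)).cons u)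
    (List.isChain_cons.2 ⟨?_, hA.append (hD.append hC ?_) ?_⟩)
  · simp [A, List.head?_append, List.head?_reverse,
      getLast?_take_support (p := p) (t := t) (by omega), hut]
  · intro a ha b hb
    rw [eq_end_of_mem_getLast?_drop_support ha]
    rw [List.head?_reverse, List.getLast?_drop, if_neg (by simp; omega),
      getLast?_take_support hs.le, Option.mem_some_iff] at hb
    rw [← hb]
    exact hys
  · intro a ha b hb
    rw [List.getLast?_reverse, head?_take_support, Option.mem_some_iff] at ha
    rw [List.head?_append, head?_drop_support hs, Option.some_or, Option.mem_some_iff] at hb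
    rw [← ha, ← hb]
    exact hx

theorem getVert_mem_attachSet_iff {S : Set V} {t : ℕ} :
    p.getVert t ∈ attachSet G p S ↔ ∃ u ∈ S, G.Adj u (p.getVert t) := by
  simp [attachSet]

theorem attachSet_nonempty (hconn : G.Connected) {u : V} (hu : u ∉ p.support) :
    (attachSet G p {z | z ∉ p.support}).Nonempty := by
  obtain ⟨d, -, hd₁, hd₂⟩ := (hconn.preconnected u x).some.exists_boundary_dart
    {z | z ∉ p.support} hu (by simp)
  exact ⟨d.snd, by simpa using hd₂, d.fst, hd₁, d.adj⟩

theorem IsLongestPath.lt_length_of_getVert_mem_attachSet (hp : IsLongestPath G p) {t : ℕ}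
    (ht : p.getVert t ∈ attachSet G p {z | z ∉ p.support}) : t < p.length := by
  obtain ⟨u, hu, hut⟩ := getVert_mem_attachSet_iff.1 ht
  by_contra! hLt
  exact hu (hp.mem_support_of_adj_end (by rwa [p.getVert_of_length_le hLt] at hut))

theorem IsLongestPath.not_adj_start_end_of_notMem_support (hconn : G.Connected)
    (hp : IsLongestPath G p) {u : V} (hu : u ∉ p.support) : ¬ G.Adj x y := by
  obtain ⟨a, ha, z, hz, hza⟩ := attachSet_nonempty hconn hu
  obtain ⟨t, rfl, ht⟩ := Walk.mem_support_iff_exists_getVert.1 ha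
  exact hp.not_adj_start_end_of_adj_getVert hz ht hza

theorem IsLongestPath.start_ne_end_of_notMem_support (hconn : G.Connected)
    (hp : IsLongestPath G p) {u : V} (hu : u ∉ p.support) : x ≠ y := by
  rintro rfl
  obtain ⟨a, ha, z, hz, hza⟩ := attachSet_nonempty hconn hu
  obtain rfl : a = x := by
    simpa [Walk.nil_iff_support_eq.1 (Walk.isPath_iff_nil.1 hp.1)] using ha
  exact hz (hp.mem_support_of_adj_start hza)

theorem IsLongestPath.adj_start_or_adj_end_or_adj (hconn : G.Connected)
    (halpha : ∀ A : Set V, IsIndepSet G A → A.ncard ≤ 3) (hp : IsLongestPath G p) {u : V}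
    (hu : u ∉ p.support) {z : V} (hzx : z ≠ x) (hzy : z ≠ y) (hzu : z ≠ u) :
    G.Adj z x ∨ G.Adj z y ∨ G.Adj z u := by
  by_contra! h
  obtain ⟨hzx', hzy', hzu'⟩ := h
  have hux : u ≠ x := fun h => hu (h ▸ p.start_mem_support)
  have huy : u ≠ y := fun h => hu (h ▸ p.end_mem_support)
  have hxu : ¬ G.Adj x u := fun h => hu (hp.mem_support_of_adj_start h.symm)
  have hyu : ¬ G.Adj y u := fun h => hu (hp.mem_support_of_adj_end h.symm)
  have := length_le_of_pairwise_not_adj halpha (l := [x, y, u, z])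
    (by simp [hp.start_ne_end_of_notMem_support hconn hu, hux.symm, huy.symm, hzx.symm,
      hzy.symm, hzu.symm])
    (by simp [hp.not_adj_start_end_of_notMem_support hconn hu, hxu, hyu, G.adj_comm _ z,
      hzx', hzy', hzu'])
  simp at this

theorem IsLongestPath.isClique_compl_support (hconn : G.Connected)
    (halpha : ∀ A : Set V, IsIndepSet G A → A.ncard ≤ 3) (hp : IsLongestPath G p) :
    G.IsClique {z | z ∉ p.support} := by
  intro w hw u hu hwu
  rcases hp.adj_start_or_adj_end_or_adj hconn halpha hu (z := w)
    (fun h => hw (h ▸ p.start_mem_support)) (fun h => hw (h ▸ p.end_mem_support)) hwu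
    with h | h | h
  · exact absurd (hp.mem_support_of_adj_start h) hw
  · exact absurd (hp.mem_support_of_adj_end h) hw
  · exact h

theorem IsLongestPath.exists_getVert_mem_attachSet_between (hconn : G.Connected)
    (halpha : ∀ A : Set V, IsIndepSet G A → A.ncard ≤ 3) (hp : IsLongestPath G p) {t₁ t₂ : ℕ}
    (h₁ : p.getVert t₁ ∈ attachSet G p {z | z ∉ p.support})
    (h₂ : p.getVert t₂ ∈ attachSet G p {z | z ∉ p.support}) (ht : t₁ < t₂) :
    ∃ s, t₁ < s ∧ s < t₂ ∧ p.getVert s ∈ attachSet G p {z | z ∉ p.support} := by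
  by_contra! hgap
  obtain ⟨u₁, hu₁, hut₁⟩ := getVert_mem_attachSet_iff.1 h₁
  obtain ⟨u₂, hu₂, hut₂⟩ := getVert_mem_attachSet_iff.1 h₂
  have ht₂ := hp.lt_length_of_getVert_mem_attachSet h₂
  -- Strictly between `t₁` and `t₂` every vertex sees `x` or `y`. The first one sees `y`, the
  -- last one does not, and where adjacency to `y` switches off a rotation lengthens `p`.
  have hends : ∀ s, t₁ < s → s < t₂ → G.Adj x (p.getVert s) ∨ G.Adj y (p.getVert s) := by
    intro s hs₁ hs₂
    rcases hp.adj_start_or_adj_end_or_adj hconn halpha hu₁ (z := p.getVert s)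
      (by rw [Ne, hp.1.getVert_eq_start_iff (by omega)]; omega)
      (by rw [Ne, hp.1.getVert_eq_end_iff (by omega)]; omega)
      (fun h => hu₁ (h ▸ p.getVert_mem_support s)) with h | h | h
    · exact .inl h.symm
    · exact .inr h.symm
    · exact absurd (getVert_mem_attachSet_iff.2 ⟨u₁, hu₁, h.symm⟩) (hgap s hs₁ hs₂)
  have hgap₂ : t₁ + 1 < t₂ := by
    by_contra! h
    obtain rfl : t₂ = t₁ + 1 := by omega
    have hu₁₂ : u₁ = u₂ ∨ G.Adj u₁ u₂ :=
      (eq_or_ne u₁ u₂).imp_right (hp.isClique_compl_support hconn halpha hu₁ hu₂)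
    exact hp.not_adj_getVert_succ hu₁ hu₂ hu₁₂ (by omega) hut₁.symm hut₂
  have hfirst : G.Adj y (p.getVert (t₁ + 1)) :=
    (hends _ (by omega) hgap₂).resolve_left (hp.not_adj_start_getVert_succ hu₁ (by omega) hut₁)
  have hlast : ¬ G.Adj y (p.getVert (t₂ - 1)) :=
    hp.not_adj_end_getVert hu₂ (by omega) (by rwa [Nat.sub_add_cancel (by omega)])
  obtain ⟨s, hs₁, hs₂, hys, hys'⟩ :=
    exists_le_lt_and_not_succ (P := fun s => G.Adj y (p.getVert s)) (by omega) hfirst hlast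
  have hxs : G.Adj x (p.getVert (s + 1)) := (hends _ (by omega) (by omega)).resolve_right hys'
  exact hp.not_adj_start_getVert_succ_of_adj_end hu₁ (by omega) (by omega) hut₁ hys hxs

theorem IsLongestPath.attachSet_subsingleton (hconn : G.Connected)
    (halpha : ∀ A : Set V, IsIndepSet G A → A.ncard ≤ 3) (hp : IsLongestPath G p) :
    (attachSet G p {z | z ∉ p.support}).Subsingleton := by
  suffices h : ∀ i j, p.getVert i ∈ attachSet G p {z | z ∉ p.support} →
      p.getVert j ∈ attachSet G p {z | z ∉ p.support} → ¬ i < j by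
    intro a ha b hb
    obtain ⟨i, rfl, -⟩ := Walk.mem_support_iff_exists_getVert.1 ha.1
    obtain ⟨j, rfl, -⟩ := Walk.mem_support_iff_exists_getVert.1 hb.1
    rw [le_antisymm (not_lt.1 (h j i hb ha)) (not_lt.1 (h i j ha hb))]
  intro i j hi hj hij
  classical
  have hex : ∃ k, i < k ∧ p.getVert k ∈ attachSet G p {z | z ∉ p.support} := ⟨j, hij, hj⟩
  obtain ⟨s, hs₁, hs₂, hs⟩ := hp.exists_getVert_mem_attachSet_between hconn halpha hi
    (Nat.find_spec hex).2 (Nat.find_spec hex).1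
  exact Nat.find_min hex hs₂ ⟨hs₁, hs⟩

variable {a b : V} {q : G.Walk a b}

theorem IsLongestPath.support_subset_of_support_subset (hp : IsLongestPath G p)
    (hq : IsLongestPath G q) (hqp : q.support ⊆ p.support) : p.support ⊆ q.support := by
  classical
  have hlen : q.length = p.length := le_antisymm (hp.2 q hq.1) (hq.2 p hp.1)
  have hcard : p.support.toFinset.card ≤ q.support.toFinset.card := by
    rw [List.toFinset_card_of_nodup hp.1.support_nodup,
      List.toFinset_card_of_nodup hq.1.support_nodup, Walk.length_support, Walk.length_support,
      hlen]
  have := Finset.eq_of_subset_of_card_le (fun v => by simpa using @hqp v) hcard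
  intro v hv
  rw [← List.mem_toFinset, this]
  exact List.mem_toFinset.2 hv

theorem IsLongestPath.isGallaiVertex_of_forall_mem_support (hp : IsLongestPath G p)
    (hham : ∀ v, v ∈ p.support) (v : V) : IsGallaiVertex G v := fun _ _ _ hq hqmax =>
  hp.support_subset_of_support_subset ⟨hq, hqmax⟩ (fun w _ => hham w) (hham v)

theorem IsLongestPath.isGallaiVertex_of_mem_attachSet (hconn : G.Connected)
    (halpha : ∀ A : Set V, IsIndepSet G A → A.ncard ≤ 3) (hp : IsLongestPath G p) {w : V}
    (hw : w ∈ attachSet G p {z | z ∉ p.support}) : IsGallaiVertex G w := by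
  intro a b q hq hqmax
  have hq' : IsLongestPath G q := ⟨hq, hqmax⟩
  obtain ⟨hwp, u, hu, huw⟩ := hw
  by_contra hwq
  by_cases hqp : q.support ⊆ p.support
  · exact hwq (hp.support_subset_of_support_subset hq' hqp hwp)
  obtain ⟨c, hcq, hcp⟩ : ∃ c ∈ q.support, c ∉ p.support := by
    simpa [List.subset_def] using hqp
  by_cases hmeet : ∃ e ∈ q.support, e ∈ p.support
  · obtain ⟨e, heq, hep⟩ := hmeet
    obtain ⟨z, hz, z', hz', hzz', hz'q⟩ :=
      exists_boundary_adj_mem_support q (S := {z | z ∉ p.support}) hcq hcp heq (by simpa)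
    obtain rfl : z' = w :=
      hp.attachSet_subsingleton hconn halpha ⟨not_not.1 hz', z, hz, hzz'⟩ ⟨hwp, u, hu, huw⟩
    exact hwq hz'q
  · push Not at hmeet
    exact hp.not_adj_start_end_of_notMem_support hconn hu
      (hq'.isClique_compl_support hconn halpha (fun h => hmeet x h p.start_mem_support)
        (fun h => hmeet y h p.end_mem_support) (hp.start_ne_end_of_notMem_support hconn hu))

end

/-- every connected graph with independence number at most 3 has a Gallai
vertex (i.e. `4P₁` is a fixer). -/
theorem stmt13 [Fintype V] (G : SimpleGraph V) (hconn : G.Connected)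
    (halpha : ∀ A : Set V, IsIndepSet G A → A.ncard ≤ 3) :
    ∃ v, IsGallaiVertex G v := by
  have : Nonempty V := hconn.nonempty
  obtain ⟨x, y, P, hP⟩ := exists_isLongestPath G
  by_cases hham : ∀ v, v ∈ P.support
  · exact ⟨x, hP.isGallaiVertex_of_forall_mem_support hham x⟩
  push Not at hham
  obtain ⟨u, hu⟩ := hham
  obtain ⟨w, hw⟩ := attachSet_nonempty hconn hu
  exact ⟨w, hP.isGallaiVertex_of_mem_attachSet hconn halpha hw⟩

end GallaiFormal
end
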